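/- arXiv:2410.02803 — 3 statements merged into one kernel-verified Lean document; each statement's English description precedes it below -/
import Mathlib

section
/- If W is uniformly distributed on [-ε/2, ε/2] and x is any fixed real number, then the dither quantization error e = Q(x + W) - W - x is uniformly distributed on [-ε/2, ε/2], where Q is the mid-point uniform quantizer with resolution ε (assuming x + W stays in the non-saturated region). -/
/-!
The quantization error `y ↦ Q y - y` is `ε`-periodic, so it factors through the circle
`ℝ ⧸ εℤ`, and its pushforward of Lebesgue measure on an interval of length `ε` does not depend
on the interval. On `[umin, umin + ε)` the error is the reflection `y ↦ umin + ε / 2 - y`,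
which carries Lebesgue measure there onto Lebesgue measure on `(-ε/2, ε/2]`. The dither error
is the quantization error of `x + W`, which is uniform on an interval of length `ε`.
-/

open MeasureTheory Set

theorem Function.Periodic.map_volume_restrict_Ioc_eq {β : Type*} [MeasurableSpace β]
    {f : ℝ → β} {T : ℝ} (hf : Periodic f T) (hT : 0 < T) (hfm : Measurable f) (s t : ℝ) :
    (volume.restrict (Ioc s (s + T))).map f = (volume.restrict (Ioc t (t + T))).map f := by
  have : Fact (0 < T) := ⟨hT⟩
  have hlift : Measurable hf.lift := QuotientAddGroup.measurable_from_quotient.mpr hfm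
  have h (u : ℝ) :
      (volume.restrict (Ioc u (u + T))).map f = (volume : Measure (AddCircle T)).map hf.lift := by
    rw [← (AddCircle.measurePreserving_mk T u).map_eq,
      Measure.map_map hlift AddCircle.measurable_mk']
    rfl
  rw [h, h]

theorem Real.map_const_sub_volume_restrict_Ioo (c a b : ℝ) :
    (volume.restrict (Ioo a b)).map (c - ·) = volume.restrict (Ioo (c - b) (c - a)) := by
  have := (Measure.measurePreserving_sub_left volume c).restrict_preimage_emb
    (MeasurableEquiv.subLeft c).measurableEmbedding (Ioo (c - b) (c - a))
  rw [preimage_const_sub_Ioo, sub_sub_cancel, sub_sub_cancel] at this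
  exact this.map_eq

theorem Real.map_const_add_volume_restrict_Icc (c a b : ℝ) :
    (volume.restrict (Icc a b)).map (c + ·) = volume.restrict (Icc (c + a) (c + b)) := by
  have := (measurePreserving_add_left volume c).restrict_preimage_emb
    (MeasurableEquiv.addLeft c).measurableEmbedding (Icc (c + a) (c + b))
  rw [preimage_const_add_Icc, add_sub_cancel_left, add_sub_cancel_left] at this
  exact this.map_eq

noncomputable def midpointQuantizer (ε umin y : ℝ) : ℝ :=
  ε * (⌊(y - umin) / ε⌋ : ℝ) + umin + ε / 2

section MidpointQuantizer

variable {ε umin : ℝ}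

theorem measurable_midpointQuantizer : Measurable (midpointQuantizer ε umin) := by
  unfold midpointQuantizer
  fun_prop

theorem periodic_midpointQuantizer_sub_self (hε : ε ≠ 0) :
    Function.Periodic (fun y => midpointQuantizer ε umin y - y) ε := by
  intro y
  have hshift : (y + ε - umin) / ε = (y - umin) / ε + 1 := by field_simp; ring
  simp only [midpointQuantizer, hshift, Int.floor_add_one]
  push_cast
  ring

theorem midpointQuantizer_sub_self_of_mem_Ico (hε : 0 < ε) {y : ℝ}
    (hy : y ∈ Ico umin (umin + ε)) : midpointQuantizer ε umin y - y = umin + ε / 2 - y := by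
  have hfloor : ⌊(y - umin) / ε⌋ = 0 := by
    rw [Int.floor_eq_zero_iff, mem_Ico, le_div_iff₀ hε, div_lt_one hε]
    constructor <;> linarith [hy.1, hy.2]
  simp [midpointQuantizer, hfloor]

theorem map_volume_restrict_Icc_midpointQuantizer_sub_self (hε : 0 < ε) (t : ℝ) :
    (volume.restrict (Icc t (t + ε))).map (fun y => midpointQuantizer ε umin y - y) =
      volume.restrict (Icc (-(ε / 2)) (ε / 2)) := by
  have hm : Measurable (fun y => midpointQuantizer ε umin y - y) :=
    measurable_midpointQuantizer.sub measurable_id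
  calc (volume.restrict (Icc t (t + ε))).map (fun y => midpointQuantizer ε umin y - y)
      = (volume.restrict (Ioc umin (umin + ε))).map
          (fun y => midpointQuantizer ε umin y - y) := by
        rw [← Measure.restrict_congr_set Ioc_ae_eq_Icc,
          (periodic_midpointQuantizer_sub_self hε.ne').map_volume_restrict_Ioc_eq hε hm]
    _ = (volume.restrict (Ioo umin (umin + ε))).map (fun y => umin + ε / 2 - y) := by
        rw [← Measure.restrict_congr_set Ioo_ae_eq_Ioc]
        exact Measure.map_congr (ae_restrict_of_forall_mem measurableSet_Ioo fun y hy =>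
          midpointQuantizer_sub_self_of_mem_Ico hε (Ioo_subset_Ico_self hy))
    _ = volume.restrict (Icc (-(ε / 2)) (ε / 2)) := by
        rw [Real.map_const_sub_volume_restrict_Ioo, Measure.restrict_congr_set Ioo_ae_eq_Icc]
        congr 2 <;> ring

end MidpointQuantizer

theorem dither_error_uniform_general
    {Ω : Type*} [MeasureSpace Ω]
    (ε umin : ℝ) (hε : 0 < ε)
    (W : Ω → ℝ) (hW : Measurable W)
    (hWu : pdf.IsUniform W (Set.Icc (-(ε / 2)) (ε / 2)) (volume : Measure Ω))
    (Q : ℝ → ℝ) (hQ : ∀ y, Q y = ε * (⌊(y - umin) / ε⌋ : ℝ) + umin + ε / 2)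
    (x : ℝ) :
    pdf.IsUniform (fun ω : Ω => Q (x + W ω) - W ω - x)
      (Set.Icc (-(ε / 2)) (ε / 2)) (volume : Measure Ω) := by
  obtain rfl : Q = midpointQuantizer ε umin := funext hQ
  have hquant : Measurable (fun y => midpointQuantizer ε umin y - y) :=
    measurable_midpointQuantizer.sub measurable_id
  have hshift : Measurable (x + ·) := measurable_const_add x
  have herror : (fun ω => midpointQuantizer ε umin (x + W ω) - W ω - x) =
      (fun y => midpointQuantizer ε umin y - y) ∘ (x + ·) ∘ W := by
    funext ω
    simp only [Function.comp_apply]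
    ring
  rw [pdf.IsUniform, herror, ← Measure.map_map hquant (hshift.comp hW),
    ← Measure.map_map hshift hW, hWu, ProbabilityTheory.cond, Measure.map_smul, Measure.map_smul,
    Real.map_const_add_volume_restrict_Icc, show x + ε / 2 = x + -(ε / 2) + ε by ring,
    map_volume_restrict_Icc_midpointQuantizer_sub_self hε]

theorem dither_error_uniform
    {Ω : Type*} [MeasureSpace Ω] [IsProbabilityMeasure (volume : Measure Ω)]
    (ε umin umax : ℝ) (hε : 0 < ε)
    (W : Ω → ℝ) (hW : Measurable W)
    (hWu : pdf.IsUniform W (Set.Icc (-(ε / 2)) (ε / 2)) (volume : Measure Ω))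
    (Q : ℝ → ℝ) (hQ : ∀ y, Q y = ε * (⌊(y - umin) / ε⌋ : ℝ) + umin + ε / 2)
    (x : ℝ) (hns : ∀ᵐ ω ∂(volume : Measure Ω), x + W ω ∈ Set.Ioo umin umax) :
    pdf.IsUniform (fun ω : Ω => Q (x + W ω) - W ω - x)
      (Set.Icc (-(ε / 2)) (ε / 2)) (volume : Measure Ω) :=
  dither_error_uniform_general ε umin hε W hW hWu Q hQ x
end

section
/- With notation as in the finite-data EDMD perturbation result (K = Φ'Φᵀ(ΦΦᵀ)⁻¹, K̃ = Φ̄'Φ̄ᵀ(Φ̄Φ̄ᵀ)⁻¹, Ψ_ε and Π_ε the perturbation cross terms), the normalized estimation error satisfies ‖K - K̃‖/‖K‖ ≤ (‖Ψ_ε‖ + ‖Π_ε‖/‖K‖)·‖(Φ̄Φ̄ᵀ)⁻¹‖, provided K ≠ 0. -/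
attribute [local instance] Matrix.frobeniusNormedAddCommGroup

open Matrix

theorem edmd_normalized_error_bound
    (N T : ℕ)
    (Φ Φ' Φε Φε' : Matrix (Fin N) (Fin T) ℝ)
    (hinv : IsUnit (Φ * Φᵀ))
    (Φb Φb' : Matrix (Fin N) (Fin T) ℝ)
    (hΦb : Φb = Φ + Φε) (hΦb' : Φb' = Φ' + Φε')
    (hinvb : IsUnit (Φb * Φbᵀ))
    (K Kt : Matrix (Fin N) (Fin N) ℝ)
    (hK : K = Φ' * Φᵀ * (Φ * Φᵀ)⁻¹)
    (hKt : Kt = Φb' * Φbᵀ * (Φb * Φbᵀ)⁻¹)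
    (Ψε Pε : Matrix (Fin N) (Fin N) ℝ)
    (hΨ : Ψε = Φε * Φᵀ + Φ * Φεᵀ + Φε * Φεᵀ)
    (hP : Pε = Φε' * Φᵀ + Φ' * Φεᵀ + Φε' * Φεᵀ)
    (hK0 : K ≠ 0) :
    ‖K - Kt‖ / ‖K‖ ≤ (‖Ψε‖ + ‖Pε‖ / ‖K‖) * ‖(Φb * Φbᵀ)⁻¹‖ := by
  have hdet : IsUnit (Φ * Φᵀ).det := (Matrix.isUnit_iff_isUnit_det _).mp hinv
  have hdetb : IsUnit (Φb * Φbᵀ).det := (Matrix.isUnit_iff_isUnit_det _).mp hinvb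
  -- K * (Φ*Φᵀ) = Φ'*Φᵀ
  have hKA : K * (Φ * Φᵀ) = Φ' * Φᵀ := by
    rw [hK, mul_assoc, Matrix.nonsing_inv_mul _ hdet, mul_one]
  have hB : Φb * Φbᵀ = Φ * Φᵀ + Ψε := by
    subst hΦb hΨ
    simp [Matrix.transpose_add, Matrix.add_mul, Matrix.mul_add]
    abel
  have hB' : Φb' * Φbᵀ = Φ' * Φᵀ + Pε := by
    subst hΦb hΦb' hP
    simp [Matrix.transpose_add, Matrix.add_mul, Matrix.mul_add]
    abel
  have hid : K - Kt = (K * Ψε - Pε) * (Φb * Φbᵀ)⁻¹ := by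
    have : K = (Φ' * Φᵀ + K * Ψε) * (Φb * Φbᵀ)⁻¹ := by
      have := Matrix.mul_nonsing_inv _ hdetb
      calc K = K * ((Φb * Φbᵀ) * (Φb * Φbᵀ)⁻¹) := by rw [this, mul_one]
        _ = (K * (Φb * Φbᵀ)) * (Φb * Φbᵀ)⁻¹ := by rw [mul_assoc]
        _ = (Φ' * Φᵀ + K * Ψε) * (Φb * Φbᵀ)⁻¹ := by rw [hB, mul_add, hKA]
    nth_rewrite 1 [this]
    rw [hKt, hB', ← sub_mul]
    congr 1
    abel
  have hKpos : (0:ℝ) < ‖K‖ := norm_pos_iff.mpr hK0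
  have hbound : ‖K - Kt‖ ≤ (‖K‖ * ‖Ψε‖ + ‖Pε‖) * ‖(Φb * Φbᵀ)⁻¹‖ := by
    rw [hid]
    calc ‖(K * Ψε - Pε) * (Φb * Φbᵀ)⁻¹‖
        ≤ ‖K * Ψε - Pε‖ * ‖(Φb * Φbᵀ)⁻¹‖ := Matrix.frobenius_norm_mul _ _
      _ ≤ (‖K * Ψε‖ + ‖Pε‖) * ‖(Φb * Φbᵀ)⁻¹‖ := by
          gcongr; exact norm_sub_le _ _
      _ ≤ (‖K‖ * ‖Ψε‖ + ‖Pε‖) * ‖(Φb * Φbᵀ)⁻¹‖ := by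
          gcongr; exact Matrix.frobenius_norm_mul _ _
  rw [div_le_iff₀ hKpos]
  refine hbound.trans_eq ?_
  generalize ‖(Φb * Φbᵀ)⁻¹‖ = b
  generalize ‖Ψε‖ = x
  generalize ‖Pε‖ = y
  have hk : ‖K‖ ≠ 0 := hKpos.ne'
  have h : y / ‖K‖ * ‖K‖ = y := div_mul_cancel₀ y hk
  calc (‖K‖ * x + y) * b = (x * ‖K‖ + y / ‖K‖ * ‖K‖) * b := by rw [h]; ring
    _ = (x + y / ‖K‖) * b * ‖K‖ := by ring
end

section
/- Let M : ℝⁿ → ℝ^{n×n} be a measurable matrix-valued function with ‖M(x)‖ ≤ c uniformly, let (x_t) be any sequence in ℝⁿ, and let (e_t) be i.i.d. random vectors with i.i.d. components uniform on [-ε/2, ε/2]. Then (1/T)·Σ_{t=0}^{T-1} e_tᵀ M(x_t) e_t converges almost surely to lim_{T→∞} (ε²/12)·(1/T)·Σ_{t=0}^{T-1} tr(M(x_t)), provided the latter Cesàro limit exists. -/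
/-!
The quadratic forms `Q t = e tᵀ M (x t) e t` are independent and uniformly bounded, and
`𝔼[Q t] = ε ^ 2 / 12 * tr (M (x t))`, because the coordinates of `e t` are independent, centred and
of variance `ε ^ 2 / 12`. It remains to prove a strong law for bounded, pairwise independent, not
identically distributed variables, by the second-moment method: the centred partial sums satisfy
`𝔼[S T ^ 2] ≤ T * K ^ 2`, so `∑ k, 𝔼[(S (k ^ 2) / k ^ 2) ^ 2] < ∞` and `S (k ^ 2) / k ^ 2 → 0`
almost surely; boundedness of the terms interpolates between consecutive squares.
-/

attribute [local instance] Matrix.frobeniusNormedAddCommGroup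

open MeasureTheory Filter
open ProbabilityTheory Finset Topology

namespace MeasureTheory.pdf.IsUniform

variable {Ω E : Type*} {mΩ : MeasurableSpace Ω} {P : Measure Ω} [MeasurableSpace E]
  {μ : Measure E} {X : Ω → E} {s : Set E}

theorem ae_mem (hs : MeasurableSet s) (hns : μ s ≠ 0) (hnt : μ s ≠ ⊤)
    (hu : IsUniform X s P μ) : ∀ᵐ ω ∂P, X ω ∈ s := by
  have h := hu.measure_preimage hns hnt hs.compl
  rw [Set.inter_compl_self, measure_empty, ENNReal.zero_div] at h
  exact h

theorem integral_comp {F : Type*} [NormedAddCommGroup F] [NormedSpace ℝ F]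
    (hns : μ s ≠ 0) (hnt : μ s ≠ ⊤) (hu : IsUniform X s P μ) {g : E → F}
    (hg : StronglyMeasurable g) :
    ∫ ω, g (X ω) ∂P = (μ s)⁻¹.toReal • ∫ x in s, g x ∂μ := by
  rw [← integral_map (hu.aemeasurable hns hnt) hg.aestronglyMeasurable, hu,
    ProbabilityTheory.cond, integral_smul_measure]

end MeasureTheory.pdf.IsUniform

lemma Real.volume_Icc_ne_zero {a b : ℝ} (hab : a < b) : volume (Set.Icc a b) ≠ 0 := by
  simpa [Real.volume_Icc] using hab

section SymmetricInterval

variable {Ω : Type*} {mΩ : MeasurableSpace Ω} {P : Measure Ω} {X : Ω → ℝ} {a : ℝ}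

theorem MeasureTheory.pdf.IsUniform.integral_eq_zero_of_Icc_neg_self (ha : 0 < a)
    (hu : pdf.IsUniform X (Set.Icc (-a) a) P) : ∫ ω, X ω ∂P = 0 := by
  rw [hu.integral_eq, integral_Icc_eq_integral_Ioc,
    ← intervalIntegral.integral_of_le (by linarith)]
  simp

theorem MeasureTheory.pdf.IsUniform.integral_sq_of_Icc_neg_self (ha : 0 < a)
    (hu : pdf.IsUniform X (Set.Icc (-a) a) P) : ∫ ω, X ω ^ 2 ∂P = a ^ 2 / 3 := by
  rw [hu.integral_comp (Real.volume_Icc_ne_zero (by linarith)) measure_Icc_lt_top.ne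
    (continuous_pow 2).stronglyMeasurable, integral_Icc_eq_integral_Ioc,
    ← intervalIntegral.integral_of_le (by linarith), integral_pow, Real.volume_Icc,
    ENNReal.toReal_inv, ENNReal.toReal_ofReal (by linarith), smul_eq_mul]
  field_simp
  ring

end SymmetricInterval

lemma Matrix.abs_entry_le_frobenius_norm {m n : Type*} [Fintype m] [Fintype n]
    (A : Matrix m n ℝ) (i : m) (j : n) : |A i j| ≤ ‖A‖ :=
  (PiLp.norm_apply_le (WithLp.toLp 2 fun j => A i j) j).trans
    (PiLp.norm_apply_le (WithLp.toLp 2 fun i => WithLp.toLp 2 fun j => A i j) i)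

section QuadraticForm

variable {Ω ι : Type*} {mΩ : MeasurableSpace Ω} {μ : Measure Ω} [Fintype ι]

lemma abs_quadForm_le (A : Matrix ι ι ℝ) (v : ι → ℝ) {a c : ℝ}
    (hv : ∀ i, |v i| ≤ a) (hA : ∀ i j, |A i j| ≤ c) :
    |∑ i, ∑ j, v i * A i j * v j| ≤ Fintype.card ι ^ 2 * (a * c * a) := by
  have hterm i j : |v i * A i j * v j| ≤ a * c * a := by
    have : 0 ≤ a := (abs_nonneg _).trans (hv i)
    have : 0 ≤ c := (abs_nonneg _).trans (hA i j)
    rw [abs_mul, abs_mul]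
    gcongr
    exacts [hv i, hA i j, hv j]
  calc |∑ i, ∑ j, v i * A i j * v j| ≤ ∑ i, ∑ j, |v i * A i j * v j| :=
        (abs_sum_le_sum_abs _ _).trans (sum_le_sum fun i _ => abs_sum_le_sum_abs _ _)
    _ ≤ ∑ _i : ι, ∑ _j : ι, a * c * a := sum_le_sum fun i _ => sum_le_sum fun j _ => hterm i j
    _ = Fintype.card ι ^ 2 * (a * c * a) := by simp [sq, mul_assoc]

omit [Fintype ι] in
lemma integral_mul_eq_ite_of_pairwise_indepFun [DecidableEq ι] {X : ι → Ω → ℝ}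
    (hX : ∀ i, MemLp (X i) 2 μ) (hind : Pairwise fun i j => IndepFun (X i) (X j) μ)
    (hmean : ∀ i, ∫ ω, X i ω ∂μ = 0) {σ2 : ℝ} (hsq : ∀ i, ∫ ω, X i ω ^ 2 ∂μ = σ2) (i j : ι) :
    ∫ ω, X i ω * X j ω ∂μ = if i = j then σ2 else 0 := by
  split_ifs with hij
  · subst hij; simp_rw [← sq, hsq]
  · simpa [hmean] using
      (hind hij).integral_fun_mul_eq_mul_integral (hX i).aestronglyMeasurable
        (hX j).aestronglyMeasurable

theorem integral_quadForm_of_pairwise_indepFun {X : ι → Ω → ℝ}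
    (hX : ∀ i, MemLp (X i) 2 μ) (hind : Pairwise fun i j => IndepFun (X i) (X j) μ)
    (hmean : ∀ i, ∫ ω, X i ω ∂μ = 0) {σ2 : ℝ} (hsq : ∀ i, ∫ ω, X i ω ^ 2 ∂μ = σ2)
    (A : Matrix ι ι ℝ) :
    ∫ ω, ∑ i, ∑ j, X i ω * A i j * X j ω ∂μ = σ2 * A.trace := by
  classical
  have hcomm i j ω : X i ω * A i j * X j ω = A i j * (X i ω * X j ω) := by ring
  have hint i j : Integrable (fun ω => X i ω * A i j * X j ω) μ := by
    simp_rw [hcomm]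
    exact ((hX i).integrable_mul (hX j)).const_mul (A i j)
  rw [integral_finsetSum _ fun i _ => integrable_finsetSum _ fun j _ => hint i j]
  simp_rw [integral_finsetSum _ fun j _ => hint _ j, hcomm, integral_const_mul,
    integral_mul_eq_ite_of_pairwise_indepFun hX hind hmean hsq]
  simp [Matrix.trace, mul_sum, mul_comm]

end QuadraticForm

lemma abs_sum_range_sub_le {z : ℕ → ℝ} {K : ℝ} (hz : ∀ t, |z t| ≤ K) {m T : ℕ} (hmT : m ≤ T) :
    |∑ t ∈ range T, z t - ∑ t ∈ range m, z t| ≤ (T - m : ℕ) * K := by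
  rw [← sum_range_add_sum_Ico _ hmT, add_sub_cancel_left]
  calc |∑ t ∈ Ico m T, z t| ≤ ∑ t ∈ Ico m T, |z t| := abs_sum_le_sum_abs _ _
    _ ≤ ∑ _t ∈ Ico m T, K := sum_le_sum fun t _ => hz t
    _ = (T - m : ℕ) * K := by simp

lemma tendsto_nat_sqrt_atTop : Tendsto Nat.sqrt atTop atTop :=
  tendsto_atTop_atTop.2 fun b => ⟨b * b, fun _ hT => Nat.le_sqrt.2 hT⟩

-- Between `k ^ 2` and `(k + 1) ^ 2` only `2 * k` bounded terms are added.
theorem tendsto_sum_range_div_of_tendsto_sq {z : ℕ → ℝ} {K : ℝ} (hz : ∀ t, |z t| ≤ K)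
    (hsq : Tendsto (fun k : ℕ => (∑ t ∈ range (k ^ 2), z t) / (k : ℝ) ^ 2) atTop (𝓝 0)) :
    Tendsto (fun T : ℕ => (∑ t ∈ range T, z t) / T) atTop (𝓝 0) := by
  have hbound : Tendsto (fun T : ℕ => |(∑ t ∈ range (T.sqrt ^ 2), z t) / (T.sqrt : ℝ) ^ 2|
      + 2 * K / T.sqrt) atTop (𝓝 0) := by
    simpa [Function.comp_def] using
      (hsq.abs.add (tendsto_const_div_atTop_nhds_zero_nat (2 * K))).comp tendsto_nat_sqrt_atTop
  refine squeeze_zero_norm' ?_ hbound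
  filter_upwards [eventually_ge_atTop 1] with T hT
  set k := T.sqrt
  have hk : (0 : ℝ) < k := by exact_mod_cast Nat.sqrt_pos.2 hT
  have hkT : k ^ 2 ≤ T := Nat.sqrt_le' T
  have hgap : T - k ^ 2 ≤ 2 * k := by
    have : T < k ^ 2 + 2 * k + 1 := by simpa [add_sq] using Nat.lt_succ_sqrt' T
    omega
  have hK : 0 ≤ K := (abs_nonneg _).trans (hz 0)
  have hdiff := abs_sum_range_sub_le hz hkT
  have hgapR : ((T - k ^ 2 : ℕ) : ℝ) ≤ 2 * k := by exact_mod_cast hgap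
  have hkTR : (k : ℝ) ^ 2 ≤ T := by exact_mod_cast hkT
  rw [Real.norm_eq_abs, abs_div, Nat.abs_cast, abs_div, abs_of_pos (by positivity : (0:ℝ) < k ^ 2)]
  calc |∑ t ∈ range T, z t| / T ≤ |∑ t ∈ range T, z t| / (k : ℝ) ^ 2 := by gcongr
    _ ≤ (|∑ t ∈ range (k ^ 2), z t| + 2 * k * K) / (k : ℝ) ^ 2 := by
        gcongr
        have := abs_sub_abs_le_abs_sub (∑ t ∈ range T, z t) (∑ t ∈ range (k ^ 2), z t)
        nlinarith
    _ = |∑ t ∈ range (k ^ 2), z t| / (k : ℝ) ^ 2 + 2 * K / k := by field_simp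

section StrongLaw

variable {Ω : Type*} {mΩ : MeasurableSpace Ω} {μ : Measure Ω}

theorem ae_tendsto_zero_of_summable_integral_sq {Y : ℕ → Ω → ℝ} (hY : ∀ k, MemLp (Y k) 2 μ)
    (hsum : Summable fun k => ∫ ω, Y k ω ^ 2 ∂μ) :
    ∀ᵐ ω ∂μ, Tendsto (fun k => Y k ω) atTop (𝓝 0) := by
  have hnorm k : eLpNorm (fun ω => Y k ω ^ 2) 1 μ = ENNReal.ofReal (∫ ω, Y k ω ^ 2 ∂μ) := by
    rw [eLpNorm_one_eq_lintegral_enorm, ← ofReal_integral_norm_eq_lintegral_enorm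
      (hY k).integrable_sq]
    simp
  have hae := summable_norm_of_tsum_eLpNorm_ne_top le_rfl
    (fun k => (hY k).integrable_sq.aestronglyMeasurable) (by
      simp_rw [hnorm]
      rw [← ENNReal.ofReal_tsum_of_nonneg (fun k => integral_nonneg fun ω => sq_nonneg _) hsum]
      exact ENNReal.ofReal_ne_top)
  filter_upwards [hae] with ω hω
  have : Tendsto (fun k => Y k ω ^ 2) atTop (𝓝 0) :=
    tendsto_zero_iff_norm_tendsto_zero.2 hω.tendsto_atTop_zero
  rw [tendsto_zero_iff_abs_tendsto_zero]
  simpa [Function.comp_def, Real.sqrt_sq_eq_abs] using this.sqrt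

theorem integral_sq_sum_le_of_pairwise_indepFun [IsFiniteMeasure μ] {ι : Type*} {Z : ι → Ω → ℝ}
    (hZ : ∀ i, MemLp (Z i) 2 μ) (hind : Pairwise fun i j => IndepFun (Z i) (Z j) μ)
    (hmean : ∀ i, ∫ ω, Z i ω ∂μ = 0) {v : ℝ} (hvar : ∀ i, variance (Z i) μ ≤ v) (s : Finset ι) :
    ∫ ω, (∑ i ∈ s, Z i ω) ^ 2 ∂μ ≤ #s * v := by
  have hsum_mean : ∫ ω, (∑ i ∈ s, Z i) ω ∂μ = 0 := by
    simp_rw [Finset.sum_apply]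
    rw [integral_finsetSum _ fun i _ => (hZ i).integrable one_le_two]
    simp [hmean]
  have hsum_meas : AEMeasurable (∑ i ∈ s, Z i) μ :=
    (memLp_finsetSum' s fun i _ => hZ i).aestronglyMeasurable.aemeasurable
  calc ∫ ω, (∑ i ∈ s, Z i ω) ^ 2 ∂μ = variance (∑ i ∈ s, Z i) μ := by
        rw [variance_of_integral_eq_zero hsum_meas hsum_mean]
        simp
    _ = ∑ i ∈ s, variance (Z i) μ :=
        IndepFun.variance_sum (fun i _ => hZ i) fun i _ j _ hij => hind hij
    _ ≤ #s * v := by simpa using sum_le_card_nsmul s _ v fun i _ => hvar i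

theorem strong_law_ae_of_bounded_of_integral_eq_zero [IsProbabilityMeasure μ] {Z : ℕ → Ω → ℝ}
    {K : ℝ} (hmeas : ∀ t, AEMeasurable (Z t) μ) (hbdd : ∀ t, ∀ᵐ ω ∂μ, |Z t ω| ≤ K)
    (hmean : ∀ t, ∫ ω, Z t ω ∂μ = 0) (hind : Pairwise fun s t => IndepFun (Z s) (Z t) μ) :
    ∀ᵐ ω ∂μ, Tendsto (fun T : ℕ => (∑ t ∈ range T, Z t ω) / T) atTop (𝓝 0) := by
  have hIcc t : ∀ᵐ ω ∂μ, Z t ω ∈ Set.Icc (-K) K := by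
    filter_upwards [hbdd t] with ω hω using abs_le.1 hω
  have hmem t : MemLp (Z t) 2 μ := memLp_of_bounded (hIcc t) (hmeas t).aestronglyMeasurable 2
  have hvar t : variance (Z t) μ ≤ K ^ 2 := by
    simpa using variance_le_sq_of_bounded (hIcc t) (hmeas t)
  have hsq_le (k : ℕ) : ∫ ω, ((∑ t ∈ range (k ^ 2), Z t ω) / (k : ℝ) ^ 2) ^ 2 ∂μ
      ≤ K ^ 2 * (1 / (k : ℝ) ^ 2) := by
    have := integral_sq_sum_le_of_pairwise_indepFun hmem hind hmean hvar (range (k ^ 2))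
    simp_rw [div_pow, integral_div]
    rcases k.eq_zero_or_pos with rfl | hk
    · simp
    · rw [card_range, Nat.cast_pow] at this
      rw [div_le_iff₀ (by positivity)]
      have hk : (k : ℝ) ≠ 0 := by positivity
      exact this.trans_eq (by field_simp)
  have hsq : ∀ᵐ ω ∂μ, Tendsto (fun k : ℕ => (∑ t ∈ range (k ^ 2), Z t ω) / (k : ℝ) ^ 2)
      atTop (𝓝 0) := by
    refine ae_tendsto_zero_of_summable_integral_sq (fun k => ?_) ?_
    · simpa only [div_eq_mul_inv] using (memLp_finsetSum _ fun t _ => hmem t).mul_const _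
    · exact .of_nonneg_of_le (fun k => integral_nonneg fun ω => sq_nonneg _) hsq_le
        ((Real.summable_one_div_nat_pow.2 one_lt_two).mul_left _)
  filter_upwards [hsq, ae_all_iff.2 hbdd] with ω hω hb
  exact tendsto_sum_range_div_of_tendsto_sq hb hω

theorem strong_law_ae_of_bounded [IsProbabilityMeasure μ] {Z : ℕ → Ω → ℝ} {K : ℝ}
    (hmeas : ∀ t, AEMeasurable (Z t) μ) (hbdd : ∀ t, ∀ᵐ ω ∂μ, |Z t ω| ≤ K)
    (hind : Pairwise fun s t => IndepFun (Z s) (Z t) μ) :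
    ∀ᵐ ω ∂μ, Tendsto (fun T : ℕ => (∑ t ∈ range T, (Z t ω - ∫ ω', Z t ω' ∂μ)) / T)
      atTop (𝓝 0) := by
  refine strong_law_ae_of_bounded_of_integral_eq_zero (K := 2 * K)
    (fun t => (hmeas t).sub_const _) (fun t => ?_) (fun t => ?_)
    fun s t hst => (hind hst).comp (measurable_id.sub_const _) (measurable_id.sub_const _)
  · have hmean : |∫ ω', Z t ω' ∂μ| ≤ K := by
      simpa using norm_integral_le_of_norm_le_const (μ := μ) (f := Z t) (hbdd t)
    filter_upwards [hbdd t] with ω hω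
    exact (abs_sub _ _).trans (by linarith)
  · have hint : Integrable (Z t) μ := .of_bound (hmeas t).aestronglyMeasurable K (hbdd t)
    simp [integral_sub hint (integrable_const _)]

end StrongLaw

theorem lln_quadratic_forms_dither_general
    {Ω : Type*} [MeasureSpace Ω] [IsProbabilityMeasure (volume : Measure Ω)]
    (n : ℕ) (ε c : ℝ) (hε : 0 < ε)
    (M : EuclideanSpace ℝ (Fin n) → Matrix (Fin n) (Fin n) ℝ)
    (hMbdd : ∀ x, ‖M x‖ ≤ c)
    (x : ℕ → EuclideanSpace ℝ (Fin n))
    (e : ℕ → Ω → (Fin n → ℝ))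
    (hemeas : ∀ t, Measurable (e t))
    (hindep : ProbabilityTheory.iIndepFun
      e (volume : Measure Ω))
    (hcomp_indep : ∀ t, ProbabilityTheory.iIndepFun
      (fun i ω => e t ω i) (volume : Measure Ω))
    (hcomp_unif : ∀ t i, pdf.IsUniform (fun ω : Ω => e t ω i)
      (Set.Icc (-(ε / 2)) (ε / 2)) (volume : Measure Ω))
    (L : ℝ)
    (hL : Tendsto (fun T : ℕ => (1 / (T : ℝ)) * ∑ t ∈ Finset.range T, (M (x t)).trace)
      atTop (nhds L)) :
    ∀ᵐ ω ∂(volume : Measure Ω),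
      Tendsto (fun T : ℕ => (1 / (T : ℝ)) * ∑ t ∈ Finset.range T,
          ∑ i, ∑ j, e t ω i * M (x t) i j * e t ω j)
        atTop (nhds (ε ^ 2 / 12 * L)) := by
  have ha : 0 < ε / 2 := half_pos hε
  have hcomp_meas t i : Measurable fun ω => e t ω i := (measurable_pi_apply i).comp (hemeas t)
  have hcomp_mem t i : ∀ᵐ ω, e t ω i ∈ Set.Icc (-(ε / 2)) (ε / 2) :=
    (hcomp_unif t i).ae_mem measurableSet_Icc (Real.volume_Icc_ne_zero (by linarith))
      measure_Icc_lt_top.ne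
  have hquad_meas (A : Matrix (Fin n) (Fin n) ℝ) :
      Measurable fun v : Fin n → ℝ => ∑ i, ∑ j, v i * A i j * v j := by fun_prop
  set Q : ℕ → Ω → ℝ := fun t ω => ∑ i, ∑ j, e t ω i * M (x t) i j * e t ω j
  have hQ_meas t : Measurable (Q t) := (hquad_meas _).comp (hemeas t)
  have hQ_mean t : ∫ ω, Q t ω = ε ^ 2 / 12 * (M (x t)).trace := by
    refine integral_quadForm_of_pairwise_indepFun
      (fun i => memLp_of_bounded (hcomp_mem t i) (hcomp_meas t i).aestronglyMeasurable 2)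
      (fun i j hij => (hcomp_indep t).indepFun hij)
      (fun i => (hcomp_unif t i).integral_eq_zero_of_Icc_neg_self ha)
      (fun i => ?_) _
    rw [(hcomp_unif t i).integral_sq_of_Icc_neg_self ha]
    ring
  have hQ_bdd t : ∀ᵐ ω, |Q t ω| ≤ Fintype.card (Fin n) ^ 2 * (ε / 2 * c * (ε / 2)) := by
    filter_upwards [ae_all_iff.2 fun i => hcomp_mem t i] with ω hω
    exact abs_quadForm_le _ _ (fun i => abs_le.2 (hω i))
      fun i j => (Matrix.abs_entry_le_frobenius_norm _ i j).trans (hMbdd _)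
  have hQ_ind : Pairwise fun s t => IndepFun (Q s) (Q t) :=
    fun s t hst => (hindep.indepFun hst).comp (hquad_meas _) (hquad_meas _)
  filter_upwards [strong_law_ae_of_bounded (fun t => (hQ_meas t).aemeasurable) hQ_bdd hQ_ind]
    with ω hω
  refine (zero_add (ε ^ 2 / 12 * L) ▸ hω.add (hL.const_mul (ε ^ 2 / 12))).congr fun T => ?_
  simp only [hQ_mean, sum_sub_distrib, ← mul_sum]
  ring

theorem lln_quadratic_forms_dither
    {Ω : Type*} [MeasureSpace Ω] [IsProbabilityMeasure (volume : Measure Ω)]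
    (n : ℕ) (ε c : ℝ) (hε : 0 < ε) (hc : 0 < c)
    (M : EuclideanSpace ℝ (Fin n) → Matrix (Fin n) (Fin n) ℝ)
    (hMmeas : ∀ i j, Measurable fun x => M x i j)
    (hMbdd : ∀ x, ‖M x‖ ≤ c)
    (x : ℕ → EuclideanSpace ℝ (Fin n))
    (e : ℕ → Ω → (Fin n → ℝ))
    (hemeas : ∀ t, Measurable (e t))
    (hindep : ProbabilityTheory.iIndepFun
      e (volume : Measure Ω))
    (hident : ∀ t, Measure.map (e t) (volume : Measure Ω) = Measure.map (e 0) (volume : Measure Ω))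
    (hcomp_indep : ∀ t, ProbabilityTheory.iIndepFun
      (fun i ω => e t ω i) (volume : Measure Ω))
    (hcomp_unif : ∀ t i, pdf.IsUniform (fun ω : Ω => e t ω i)
      (Set.Icc (-(ε / 2)) (ε / 2)) (volume : Measure Ω))
    (L : ℝ)
    (hL : Tendsto (fun T : ℕ => (1 / (T : ℝ)) * ∑ t ∈ Finset.range T, (M (x t)).trace)
      atTop (nhds L)) :
    ∀ᵐ ω ∂(volume : Measure Ω),
      Tendsto (fun T : ℕ => (1 / (T : ℝ)) * ∑ t ∈ Finset.range T,
          ∑ i, ∑ j, e t ω i * M (x t) i j * e t ω j)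
        atTop (nhds (ε ^ 2 / 12 * L)) :=
  lln_quadratic_forms_dither_general n ε c hε M hMbdd x e hemeas hindep hcomp_indep hcomp_unif L hL
end
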